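/- There exists a function update from flat Plebeia trees, keys, and values to optional flat Plebeia trees such that for every tree t satisfying the structural invariants (SI1) and (SI2), every key k, and every value v: if k ∈ DOM(t), then update(t, k, v) = Some t' for some tree t' satisfying the structural invariants with ⟦t'⟧(k) = v and ⟦t'⟧(k') = ⟦t⟧(k') for every key k' ≠ k; and if k ∉ DOM(t), then update(t, k, v) = None. -/
import Mathlib


/-- A side is `L` or `R`. -/
inductive Side : Type
  | L | R
deriving DecidableEq, Repr

/-- A key is a list of sides. -/
abbrev Key := List Side

/-- The strict order `L < R` on sides. -/
def Side.lt : Side → Side → Prop := fun a b => a = Side.L ∧ b = Side.R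

/-- The strict lexicographic order on keys induced by `L < R`. -/
def keyLt : Key → Key → Prop := List.Lex Side.lt

/-- A list of keys is prefix-free: for any two distinct keys in it,
neither is a prefix of the other. -/
def PrefixFreeList (ks : List Key) : Prop :=
  List.Pairwise (fun a b => ¬ a <+: b ∧ ¬ b <+: a) ks

/-- A set of keys is prefix-free. -/
def PrefixFreeSet (S : Set Key) : Prop :=
  ∀ a ∈ S, ∀ b ∈ S, a ≠ b → ¬ a <+: b

/-- A list of keys is strictly increasing in the lexicographic order. -/
def SortedKeys (ks : List Key) : Prop := List.Pairwise keyLt ks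

/-- Key list of an association list is prefix-free and strictly increasing. -/
def GoodKeyList (ks : List Key) : Prop := PrefixFreeList ks ∧ SortedKeys ks

/-- Prepend the key `s` to the key of every entry. -/
def prependAll {β : Type _} (s : Key) (l : List (Key × β)) : List (Key × β) :=
  l.map (fun e => (s ++ e.1, e.2))

/-- `lookup l k` is `some` of the value of the first entry of `l` with key `k`. -/
def lookupA {β : Type _} (l : List (Key × β)) (k : Key) : Option β :=
  (l.find? (fun e => decide (e.1 = k))).map Prod.snd
/-- Flat Plebeia trees over a value type `α`. -/
inductive FNode (α : Type) : Type
  | leaf : α → FNode α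
  | branch : FNode α → FNode α → FNode α
  | extender : Key → FNode α → FNode α

variable {α : Type}

def FNode.isExtender : FNode α → Prop
  | .extender _ _ => True
  | _ => False

/-- The model `⟦t⟧ : key ⇀ α` of a flat Plebeia tree, as a function into `Option`. -/
def FNode.model : FNode α → Key → Option α
  | .leaf v, [] => some v
  | .leaf _, _ :: _ => none
  | .branch l _, Side.L :: k => l.model k
  | .branch _ r, Side.R :: k => r.model k
  | .branch _ _, [] => none
  | .extender s n, k => if s <+: k then n.model (k.drop s.length) else none

/-- `DOM t`: the set of keys on which `⟦t⟧` is defined. -/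
def FNode.dom (t : FNode α) : Set Key := {k | (t.model k).isSome}

/-- Structural invariants (SI1), (SI2) at every subtree:
no extender has an extender as direct child, and no extender has an empty key. -/
def FNode.inv : FNode α → Prop
  | .leaf _ => True
  | .branch l r => l.inv ∧ r.inv
  | .extender s n => (¬ n.isExtender) ∧ s ≠ [] ∧ n.inv


def FNode.upd : FNode α → Key → α → Option (FNode α)
  | .leaf _, [], v => some (.leaf v)
  | .leaf _, _ :: _, _ => none
  | .branch l r, Side.L :: k, v => (FNode.upd l k v).map (fun l' => .branch l' r)
  | .branch l r, Side.R :: k, v => (FNode.upd r k v).map (fun r' => .branch l r')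
  | .branch _ _, [], _ => none
  | .extender s n, k, v =>
      if s <+: k then (FNode.upd n (k.drop s.length) v).map (.extender s) else none

lemma upd_not_extender {t t' : FNode α} {k : Key} {v : α}
    (h : t.upd k v = some t') (hne : ¬ t.isExtender) : ¬ t'.isExtender := by
  cases t with
  | leaf a =>
    cases k with
    | nil => simp [FNode.upd] at h; subst h; simp [FNode.isExtender]
    | cons a l => simp [FNode.upd] at h
  | branch l r =>
    cases k with
    | nil => simp [FNode.upd] at h
    | cons a l =>
      cases a <;> simp [FNode.upd, Option.map_eq_some_iff] at h <;>
        obtain ⟨x, hx, rfl⟩ := h <;> simp [FNode.isExtender]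
  | extender s n => exact absurd trivial hne

/-- there is an `update` function on flat Plebeia trees that,
on trees satisfying the structural invariants, succeeds exactly when the key is
in the domain, in which case it overrides the model at `k` by `v` and preserves
the invariants; otherwise it returns `none`. -/
theorem stmt7 {α : Type} :
    ∃ upd : FNode α → Key → α → Option (FNode α),
      ∀ (t : FNode α) (k : Key) (v : α), t.inv →
        (k ∈ t.dom →
          ∃ t' : FNode α, upd t k v = some t' ∧ t'.inv ∧
            t'.model k = some v ∧ ∀ k' : Key, k' ≠ k → t'.model k' = t.model k') ∧
        (k ∉ t.dom → upd t k v = none) := by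
  refine ⟨FNode.upd, ?_⟩
  intro t
  induction t with
  | leaf a =>
    intro k v _
    cases k with
    | nil =>
      constructor
      · intro _
        exact ⟨.leaf v, rfl, trivial, rfl, fun k' hk' => by
          cases k' with
          | nil => exact absurd rfl hk'
          | cons a l => simp [FNode.model]⟩
      · intro h; exact absurd (by simp [FNode.dom, FNode.model]) h
    | cons a l =>
      constructor
      · intro h; exact absurd h (by simp [FNode.dom, FNode.model])
      · intro _; rfl
  | branch l r ihl ihr =>
    intro k v hinv
    obtain ⟨hl, hr⟩ := hinv
    cases k with
    | nil =>
      constructor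
      · intro h; exact absurd h (by simp [FNode.dom, FNode.model])
      · intro _; rfl
    | cons a k =>
      cases a with
      | L =>
        constructor
        · intro h
          have hk : k ∈ l.dom := h
          obtain ⟨t', ht', hinv', hm, hrest⟩ := ((ihl k v hl).1 hk)
          refine ⟨.branch t' r, by simp [FNode.upd, ht'], ⟨hinv', hr⟩, hm, ?_⟩
          intro k' hk'
          cases k' with
          | nil => simp [FNode.model]
          | cons b k' =>
            cases b with
            | L => exact hrest k' (by simpa using hk')
            | R => simp [FNode.model]
        · intro h
          have hk : k ∉ l.dom := h
          simp [FNode.upd, (ihl k v hl).2 hk]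
      | R =>
        constructor
        · intro h
          have hk : k ∈ r.dom := h
          obtain ⟨t', ht', hinv', hm, hrest⟩ := ((ihr k v hr).1 hk)
          refine ⟨.branch l t', by simp [FNode.upd, ht'], ⟨hl, hinv'⟩, hm, ?_⟩
          intro k' hk'
          cases k' with
          | nil => simp [FNode.model]
          | cons b k' =>
            cases b with
            | L => simp [FNode.model]
            | R => exact hrest k' (by simpa using hk')
        · intro h
          have hk : k ∉ r.dom := h
          simp [FNode.upd, (ihr k v hr).2 hk]
  | extender s n ih =>
    intro k v hinv
    obtain ⟨hne, hs, hn⟩ := hinv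
    by_cases hp : s <+: k
    · obtain ⟨u, rfl⟩ := hp
      have hdrop : (s ++ u).drop s.length = u := by simp
      constructor
      · intro h
        have hu : u ∈ n.dom := by
          have : ((FNode.extender s n).model (s ++ u)).isSome := h
          simpa [FNode.model, FNode.dom, hdrop] using this
        obtain ⟨t', ht', hinv', hm, hrest⟩ := ((ih u v hn).1 hu)
        refine ⟨.extender s t', ?_, ⟨upd_not_extender ht' hne, hs, hinv'⟩, ?_, ?_⟩
        · simp [FNode.upd, hdrop, ht']
        · simp [FNode.model, hdrop, hm]
        · intro k' hk'
          by_cases hp' : s <+: k'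
          · obtain ⟨u', rfl⟩ := hp'
            have hd' : (s ++ u').drop s.length = u' := by simp
            have : u' ≠ u := fun h => hk' (by rw [h])
            simp [FNode.model, hd', hrest u' this]
          · simp [FNode.model, hp']
      · intro h
        have hu : u ∉ n.dom := by
          intro hc
          exact h (by simpa [FNode.dom, FNode.model, hdrop] using hc)
        simp [FNode.upd, hdrop, (ih u v hn).2 hu]
    · constructor
      · intro h
        exact absurd h (by simp [FNode.dom, FNode.model, hp])
      · intro _
        simp [FNode.upd, hp]
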